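/- (Negativity of the growth rate below δ*, used in the proof of Theorem 4) Let Ω be an LT output degree distribution, r_i ∈ (0,1], r_o ∈ (0,1), and suppose r_i·(1 − r_o) > f_max(0) = sup_{λ ∈ 𝒟_λ}[ r_i·H_b(λ) + log₂(1 − ρ_λ) ] (equivalently lim_{δ→0⁺} G(δ) < 0). Then 0 < δ* < 1/2 and G(δ) < 0 for every δ ∈ (0, δ*). -/
import Mathlib


open Finset Filter

/-- Binary entropy function (base-2 logarithms). -/
noncomputable def Hb (x : ℝ) : ℝ := -x * Real.logb 2 x - (1 - x) * Real.logb 2 (1 - x)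

/-- `ρ_λ = (1/2)·Σ_{j=1}^{dmax} Ω_j·(1 − (1 − 2λ)^j)`. -/
noncomputable def rho (dmax : ℕ) (Ω : ℕ → ℝ) (lam : ℝ) : ℝ :=
  (1 / 2) * ∑ j ∈ Finset.Icc 1 dmax, Ω j * (1 - (1 - 2 * lam) ^ j)

open scoped Classical in
/-- The domain `𝒟_λ`: `(0,1)` if `Ω_j = 0` for every even `j`, and `(0,1]` otherwise. -/
noncomputable def Dset (dmax : ℕ) (Ω : ℕ → ℝ) : Set ℝ :=
  if ∀ j ∈ Finset.Icc 1 dmax, Even j → Ω j = 0 then Set.Ioo 0 1 else Set.Ioc 0 1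

/-- `f(δ,λ) = r_i·H_b(λ) + δ·log₂ ρ_λ + (1−δ)·log₂(1−ρ_λ)`. -/
noncomputable def ff (dmax : ℕ) (Ω : ℕ → ℝ) (ri δ lam : ℝ) : ℝ :=
  ri * Hb lam + δ * Real.logb 2 (rho dmax Ω lam) + (1 - δ) * Real.logb 2 (1 - rho dmax Ω lam)

/-- `f_max(δ) = sup_{λ ∈ 𝒟_λ} f(δ,λ)`. -/
noncomputable def fmax (dmax : ℕ) (Ω : ℕ → ℝ) (ri δ : ℝ) : ℝ :=
  sSup (ff dmax Ω ri δ '' Dset dmax Ω)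

/-- Growth rate `G(δ) = H_b(δ) − r_i·(1 − r_o) + f_max(δ)`. -/
noncomputable def Gr (dmax : ℕ) (Ω : ℕ → ℝ) (ri ro δ : ℝ) : ℝ :=
  Hb δ - ri * (1 - ro) + fmax dmax Ω ri δ

/-- Normalized typical minimum distance `δ*`: `0` if `lim_{δ→0⁺} G(δ) ≥ 0`, and
`inf {δ > 0 : G(δ) > 0}` otherwise. -/
noncomputable def deltaStar (dmax : ℕ) (Ω : ℕ → ℝ) (ri ro : ℝ) : ℝ :=
  if 0 ≤ limUnder (nhdsWithin 0 (Set.Ioi 0)) (Gr dmax Ω ri ro) then 0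
  else sInf {δ : ℝ | 0 < δ ∧ 0 < Gr dmax Ω ri ro δ}

/-! ### auxiliary lemmas -/

lemma log2_pos : (0:ℝ) < Real.log 2 := Real.log_pos one_lt_two

lemma Hb_eq (x : ℝ) : Hb x = Real.binEntropy x / Real.log 2 := by
  simp only [Hb, Real.binEntropy, Real.logb, Real.log_inv]
  ring

lemma Hb_continuous : Continuous Hb := by
  have : Hb = fun x => Real.binEntropy x / Real.log 2 := funext Hb_eq
  rw [this]
  exact Real.binEntropy_continuous.div_const _

@[simp] lemma Hb_zero : Hb 0 = 0 := by simp [Hb_eq]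

@[simp] lemma Hb_one : Hb 1 = 0 := by simp [Hb_eq]

lemma Hb_half : Hb (1/2) = 1 := by
  rw [Hb_eq, show (1/2:ℝ) = 2⁻¹ by norm_num, Real.binEntropy_two_inv]
  exact div_self log2_pos.ne'

lemma Hb_symm (x : ℝ) : Hb (1 - x) = Hb x := by
  rw [Hb_eq, Hb_eq, Real.binEntropy_one_sub]

lemma Hb_nonneg {x : ℝ} (h0 : 0 ≤ x) (h1 : x ≤ 1) : 0 ≤ Hb x := by
  rw [Hb_eq]; exact div_nonneg (Real.binEntropy_nonneg h0 h1) log2_pos.le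

lemma Hb_le_one (x : ℝ) : Hb x ≤ 1 := by
  rw [Hb_eq, div_le_one log2_pos]
  exact Real.binEntropy_le_log_two

lemma Hb_strictMonoOn : StrictMonoOn Hb (Set.Icc 0 (1/2)) := by
  intro x hx y hy hxy
  rw [Hb_eq, Hb_eq, div_lt_div_iff_of_pos_right log2_pos]
  have h : (1/2:ℝ) = 2⁻¹ := by norm_num
  exact Real.binEntropy_strictMonoOn (by rw [← h]; exact hx) (by rw [← h]; exact hy) hxy

lemma Hb_monotoneOn : MonotoneOn Hb (Set.Icc 0 (1/2)) := Hb_strictMonoOn.monotoneOn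

/-- relative entropy in base 2 -/
noncomputable def D2 (a b : ℝ) : ℝ :=
  a * (Real.logb 2 a - Real.logb 2 b) + (1 - a) * (Real.logb 2 (1 - a) - Real.logb 2 (1 - b))

lemma D2_eq_log (a b : ℝ) : D2 a b =
    (a * (Real.log a - Real.log b) + (1 - a) * (Real.log (1 - a) - Real.log (1 - b))) /
      Real.log 2 := by
  simp only [D2, Real.logb]; ring

lemma D2_self (a : ℝ) : D2 a a = 0 := by simp [D2]

/-- `p * (log p - log q) ≥ p - q` for positive `p q`. -/
lemma mul_log_sub_ge {p q : ℝ} (hp : 0 < p) (hq : 0 < q) :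
    p - q ≤ p * (Real.log p - Real.log q) := by
  have h := Real.log_le_sub_one_of_pos (div_pos hq hp)
  rw [Real.log_div hq.ne' hp.ne'] at h
  have h2 : q / p * p = q := div_mul_cancel₀ q hp.ne'
  nlinarith

lemma mul_log_sub_gt {p q : ℝ} (hp : 0 < p) (hq : 0 < q) (hne : q ≠ p) :
    p - q < p * (Real.log p - Real.log q) := by
  have h := Real.log_lt_sub_one_of_pos (div_pos hq hp) (by
    rw [Ne, div_eq_one_iff_eq hp.ne']; exact hne)
  rw [Real.log_div hq.ne' hp.ne'] at h
  have h2 : q / p * p = q := div_mul_cancel₀ q hp.ne'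
  nlinarith

lemma D2_nonneg {a b : ℝ} (ha0 : 0 ≤ a) (ha1 : a ≤ 1) (hb0 : 0 < b) (hb1 : b < 1) :
    0 ≤ D2 a b := by
  rw [D2_eq_log]
  apply div_nonneg _ log2_pos.le
  rcases eq_or_lt_of_le ha0 with h0 | h0
  · rw [← h0]; simp
    have := Real.log_nonpos (by linarith) (by linarith : 1 - b ≤ 1)
    linarith
  rcases eq_or_lt_of_le ha1 with h1 | h1
  · rw [h1]; simp
    have := Real.log_nonpos hb0.le hb1.le
    linarith
  · have t1 := mul_log_sub_ge h0 hb0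
    have t2 := mul_log_sub_ge (by linarith : (0:ℝ) < 1 - a) (by linarith : (0:ℝ) < 1 - b)
    linarith

lemma D2_pos {a b : ℝ} (ha0 : 0 < a) (ha1 : a < 1) (hb0 : 0 < b) (hb1 : b < 1)
    (hne : a ≠ b) : 0 < D2 a b := by
  rw [D2_eq_log]
  apply div_pos _ log2_pos
  have t1 := mul_log_sub_gt ha0 hb0 (Ne.symm hne)
  have t2 := mul_log_sub_ge (by linarith : (0:ℝ) < 1 - a) (by linarith : (0:ℝ) < 1 - b)
  linarith

lemma D2_mono {a b b' : ℝ} (ha0 : 0 < a) (hab : a ≤ b) (hbb : b ≤ b') (hb1 : b' < 1) :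
    D2 a b ≤ D2 a b' := by
  rcases eq_or_lt_of_le hbb with h | hlt
  · rw [h]
  have hb0 : 0 < b := lt_of_lt_of_le ha0 hab
  have h1b' : (0:ℝ) < 1 - b' := by linarith
  have h1b : (0:ℝ) < 1 - b := by linarith
  rw [D2_eq_log, D2_eq_log]
  have hd1 : 0 ≤ Real.log b' - Real.log b := by
    have := Real.log_le_log hb0 hlt.le
    linarith
  have hd2 : 0 ≤ Real.log (1 - b) - Real.log (1 - b') := by
    have := Real.log_le_log h1b' (by linarith : 1 - b' ≤ 1 - b)
    linarith
  have hA : b * (Real.log b' - Real.log b) ≤ b' - b := by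
    have h := Real.log_le_sub_one_of_pos (div_pos (by linarith : (0:ℝ) < b') hb0)
    rw [Real.log_div (by linarith : b' ≠ 0) hb0.ne'] at h
    have h2 : b' / b * b = b' := div_mul_cancel₀ _ hb0.ne'
    nlinarith
  have hA2 : a * (Real.log b' - Real.log b) ≤ b' - b :=
    le_trans (mul_le_mul_of_nonneg_right hab hd1) hA
  have hB : b' - b ≤ (1 - b) * (Real.log (1 - b) - Real.log (1 - b')) := by
    have h := mul_log_sub_ge h1b h1b'
    linarith
  have hB2 : (1 - b) * (Real.log (1 - b) - Real.log (1 - b'))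
      ≤ (1 - a) * (Real.log (1 - b) - Real.log (1 - b')) :=
    mul_le_mul_of_nonneg_right (by linarith) hd2
  have hnum : a * (Real.log a - Real.log b) + (1 - a) * (Real.log (1 - a) - Real.log (1 - b))
      ≤ a * (Real.log a - Real.log b') + (1 - a) * (Real.log (1 - a) - Real.log (1 - b')) := by
    nlinarith
  exact div_le_div_of_nonneg_right hnum log2_pos.le



/-- Key algebraic identity. -/
lemma Hb_add_eq_neg_D2 (a p : ℝ) :
    Hb a + a * Real.logb 2 p + (1 - a) * Real.logb 2 (1 - p) = -D2 a p := by
  simp only [Hb, D2]; ring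

lemma Hb_self_id (a : ℝ) :
    Hb a + a * Real.logb 2 a + (1 - a) * Real.logb 2 (1 - a) = 0 := by
  simp only [Hb]; ring

lemma D2_chain (a b p : ℝ) :
    D2 a p - D2 b p = D2 a b + (b - a) *
      ((Real.logb 2 p - Real.logb 2 b) + (Real.logb 2 (1 - b) - Real.logb 2 (1 - p))) := by
  simp only [D2]; ring

lemma logb_half' : Real.logb 2 (1/2 : ℝ) = -1 := by
  rw [show (1/2:ℝ) = 2⁻¹ by norm_num, Real.logb_inv, Real.logb_self_eq_one one_lt_two]

lemma logb_quarter : Real.logb 2 (1/4 : ℝ) = -2 := by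
  rw [show (1/4:ℝ) = 2⁻¹ * 2⁻¹ by norm_num,
    Real.logb_mul (by norm_num) (by norm_num), Real.logb_inv,
    Real.logb_self_eq_one one_lt_two]
  norm_num

section rhoD

variable {dmax : ℕ} {Ω : ℕ → ℝ}

lemma rho_continuous (dmax : ℕ) (Ω : ℕ → ℝ) : Continuous (rho dmax Ω) := by
  unfold rho
  apply continuous_const.mul
  apply continuous_finset_sum
  intro j _
  exact continuous_const.mul (continuous_const.sub
    ((continuous_const.sub (continuous_const.mul continuous_id)).pow j))

lemma rho_zero' : rho dmax Ω 0 = 0 := by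
  simp [rho]

lemma rho_half' (hΩsum : ∑ j ∈ Finset.Icc 1 dmax, Ω j = 1) : rho dmax Ω (1/2) = 1/2 := by
  unfold rho
  rw [Finset.sum_congr rfl (fun j hj => ?_), hΩsum]
  · norm_num
  · have hj1 : 1 ≤ j := (Finset.mem_Icc.1 hj).1
    rw [show (1 - 2 * (1/2 : ℝ)) = 0 by norm_num, zero_pow (by omega : j ≠ 0)]
    ring

lemma exists_Omega_pos (hΩpos : ∀ j ∈ Finset.Icc 1 dmax, 0 ≤ Ω j)
    (hΩsum : ∑ j ∈ Finset.Icc 1 dmax, Ω j = 1) :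
    ∃ j ∈ Finset.Icc 1 dmax, 0 < Ω j := by
  by_contra h
  push_neg at h
  have : ∑ j ∈ Finset.Icc 1 dmax, Ω j = 0 :=
    Finset.sum_eq_zero fun j hj => le_antisymm (h j hj) (hΩpos j hj)
  rw [hΩsum] at this
  norm_num at this

lemma pow_abs_le_one {x : ℝ} (h : |x| ≤ 1) (j : ℕ) : |x ^ j| ≤ 1 := by
  rw [abs_pow]
  calc |x| ^ j ≤ 1 ^ j := pow_le_pow_left₀ (abs_nonneg x) h j
  _ = 1 := one_pow j

lemma rho_nonneg (hΩpos : ∀ j ∈ Finset.Icc 1 dmax, 0 ≤ Ω j) {l : ℝ}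
    (h0 : 0 ≤ l) (h1 : l ≤ 1) : 0 ≤ rho dmax Ω l := by
  unfold rho
  apply mul_nonneg (by norm_num)
  apply Finset.sum_nonneg
  intro j hj
  apply mul_nonneg (hΩpos j hj)
  have h2 := pow_abs_le_one (x := 1 - 2*l) (abs_le.2 ⟨by linarith, by linarith⟩) j
  have := le_abs_self ((1 - 2*l) ^ j)
  linarith

lemma rho_le_one (hΩpos : ∀ j ∈ Finset.Icc 1 dmax, 0 ≤ Ω j)
    (hΩsum : ∑ j ∈ Finset.Icc 1 dmax, Ω j = 1) {l : ℝ}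
    (h0 : 0 ≤ l) (h1 : l ≤ 1) : rho dmax Ω l ≤ 1 := by
  unfold rho
  have hsum : ∑ j ∈ Finset.Icc 1 dmax, Ω j * (1 - (1 - 2*l) ^ j)
      ≤ ∑ j ∈ Finset.Icc 1 dmax, Ω j * 2 := by
    apply Finset.sum_le_sum
    intro j hj
    apply mul_le_mul_of_nonneg_left ?_ (hΩpos j hj)
    have h2 := pow_abs_le_one (x := 1 - 2*l) (abs_le.2 ⟨by linarith, by linarith⟩) j
    have := neg_abs_le ((1 - 2*l) ^ j)
    linarith
  rw [← Finset.sum_mul, hΩsum] at hsum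
  linarith

lemma rho_strictMonoOn (hΩpos : ∀ j ∈ Finset.Icc 1 dmax, 0 ≤ Ω j)
    (hΩsum : ∑ j ∈ Finset.Icc 1 dmax, Ω j = 1) :
    StrictMonoOn (rho dmax Ω) (Set.Icc 0 (1/2)) := by
  intro x hx y hy hxy
  unfold rho
  apply mul_lt_mul_of_pos_left ?_ (by norm_num : (0:ℝ) < 1/2)
  have hy0 : 0 ≤ 1 - 2*y := by linarith [hy.2]
  have hyx : 1 - 2*y < 1 - 2*x := by linarith
  apply Finset.sum_lt_sum
  · intro j hj
    apply mul_le_mul_of_nonneg_left ?_ (hΩpos j hj)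
    have := pow_le_pow_left₀ hy0 hyx.le j
    linarith
  · obtain ⟨j0, hj0, hΩj0⟩ := exists_Omega_pos hΩpos hΩsum
    refine ⟨j0, hj0, ?_⟩
    have hj1 : 1 ≤ j0 := (Finset.mem_Icc.1 hj0).1
    have := pow_lt_pow_left₀ hyx hy0 (by omega : j0 ≠ 0)
    nlinarith

lemma rho_monotoneOn (hΩpos : ∀ j ∈ Finset.Icc 1 dmax, 0 ≤ Ω j)
    (hΩsum : ∑ j ∈ Finset.Icc 1 dmax, Ω j = 1) :
    MonotoneOn (rho dmax Ω) (Set.Icc 0 (1/2)) :=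
  (rho_strictMonoOn hΩpos hΩsum).monotoneOn

lemma rho_pos (hΩpos : ∀ j ∈ Finset.Icc 1 dmax, 0 ≤ Ω j)
    (hΩsum : ∑ j ∈ Finset.Icc 1 dmax, Ω j = 1) {l : ℝ}
    (h0 : 0 < l) (h1 : l < 1) : 0 < rho dmax Ω l := by
  unfold rho
  apply mul_pos (by norm_num)
  obtain ⟨j0, hj0, hΩj0⟩ := exists_Omega_pos hΩpos hΩsum
  apply Finset.sum_pos'
  · intro j hj
    apply mul_nonneg (hΩpos j hj)
    have h2 := pow_abs_le_one (x := 1 - 2*l) (abs_le.2 ⟨by linarith, by linarith⟩) j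
    have := le_abs_self ((1 - 2*l) ^ j)
    linarith
  · refine ⟨j0, hj0, ?_⟩
    have habs : |1 - 2*l| < 1 := abs_lt.2 ⟨by linarith, by linarith⟩
    have hj1 : 1 ≤ j0 := (Finset.mem_Icc.1 hj0).1
    have hlt : |1 - 2*l| ^ j0 < 1 := by
      calc |1 - 2*l| ^ j0 < 1 ^ j0 := pow_lt_pow_left₀ habs (abs_nonneg _) (by omega)
      _ = 1 := one_pow j0
    have h1' : (1 - 2*l) ^ j0 < 1 := by
      have h2 := le_abs_self ((1 - 2*l) ^ j0)
      rw [abs_pow] at h2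
      linarith
    nlinarith

lemma rho_min_le (hΩpos : ∀ j ∈ Finset.Icc 1 dmax, 0 ≤ Ω j) {l : ℝ}
    (h0 : 0 ≤ l) (h1 : l ≤ 1) : rho dmax Ω (min l (1 - l)) ≤ rho dmax Ω l := by
  rcases le_total l (1 - l) with h | h
  · rw [min_eq_left h]
  · rw [min_eq_right h]
    unfold rho
    apply mul_le_mul_of_nonneg_left ?_ (by norm_num : (0:ℝ) ≤ 1/2)
    apply Finset.sum_le_sum
    intro j hj
    apply mul_le_mul_of_nonneg_left ?_ (hΩpos j hj)
    have key : (1 - 2*l) ^ j ≤ (1 - 2*(1 - l)) ^ j := by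
      have h2 : 1 - 2*(1-l) = -(1 - 2*l) := by ring
      have h3 : (0:ℝ) ≤ 1 - 2*(1-l) := by linarith
      calc (1 - 2*l) ^ j ≤ |(1 - 2*l) ^ j| := le_abs_self _
      _ = |1 - 2*(1-l)| ^ j := by rw [abs_pow, h2, abs_neg]
      _ = (1 - 2*(1-l)) ^ j := by rw [abs_of_nonneg h3]
    linarith

lemma Dset_subset_Icc (dmax : ℕ) (Ω : ℕ → ℝ) : Dset dmax Ω ⊆ Set.Icc 0 1 := by
  unfold Dset
  split_ifs
  · exact fun x hx => ⟨hx.1.le, hx.2.le⟩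
  · exact fun x hx => ⟨hx.1.le, hx.2⟩

lemma Dset_pos (dmax : ℕ) (Ω : ℕ → ℝ) {l : ℝ} (hl : l ∈ Dset dmax Ω) : 0 < l := by
  unfold Dset at hl
  split_ifs at hl
  · exact hl.1
  · exact hl.1

lemma mem_Dset (dmax : ℕ) (Ω : ℕ → ℝ) {l : ℝ} (h0 : 0 < l) (h1 : l ≤ 1/2) :
    l ∈ Dset dmax Ω := by
  unfold Dset
  split_ifs
  · exact ⟨h0, by linarith⟩
  · exact ⟨h0, by linarith⟩

lemma rho_lt_one (hΩpos : ∀ j ∈ Finset.Icc 1 dmax, 0 ≤ Ω j)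
    (hΩsum : ∑ j ∈ Finset.Icc 1 dmax, Ω j = 1) {l : ℝ}
    (hl : l ∈ Dset dmax Ω) : rho dmax Ω l < 1 := by
  have hIcc := Dset_subset_Icc dmax Ω hl
  have h0 : 0 < l := Dset_pos dmax Ω hl
  have h1 : l ≤ 1 := hIcc.2
  have key : ∀ j0 ∈ Finset.Icc 1 dmax, 0 < Ω j0 → -1 < (1 - 2*l) ^ j0 →
      rho dmax Ω l < 1 := by
    intro j0 hj0 hΩj0 hpow
    unfold rho
    have hsum : ∑ j ∈ Finset.Icc 1 dmax, Ω j * (1 - (1 - 2*l) ^ j)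
        < ∑ j ∈ Finset.Icc 1 dmax, Ω j * 2 := by
      apply Finset.sum_lt_sum
      · intro j hj
        apply mul_le_mul_of_nonneg_left ?_ (hΩpos j hj)
        have h2 := pow_abs_le_one (x := 1 - 2*l) (abs_le.2 ⟨by linarith, by linarith⟩) j
        have := neg_abs_le ((1 - 2*l) ^ j)
        linarith
      · exact ⟨j0, hj0, by nlinarith⟩
    rw [← Finset.sum_mul, hΩsum] at hsum
    linarith
  rcases lt_or_eq_of_le h1 with hlt | heq
  · obtain ⟨j0, hj0, hΩj0⟩ := exists_Omega_pos hΩpos hΩsum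
    apply key j0 hj0 hΩj0
    have habs : |1 - 2*l| < 1 := abs_lt.2 ⟨by linarith, by linarith⟩
    have hj1 : 1 ≤ j0 := (Finset.mem_Icc.1 hj0).1
    have hlt2 : |1 - 2*l| ^ j0 < 1 := by
      calc |1 - 2*l| ^ j0 < 1 ^ j0 := pow_lt_pow_left₀ habs (abs_nonneg _) (by omega)
      _ = 1 := one_pow j0
    have h2 := neg_abs_le ((1 - 2*l) ^ j0)
    rw [abs_pow] at h2
    linarith
  · -- l = 1; Dset must be the Ioc branch, so some even-index mass exists
    unfold Dset at hl
    split_ifs at hl with hev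
    · exfalso; rw [heq] at hl; exact lt_irrefl 1 hl.2
    · push_neg at hev
      obtain ⟨je, hje, hjeEven, hjeNe⟩ := hev
      apply key je hje (lt_of_le_of_ne (hΩpos je hje) (Ne.symm hjeNe))
      rw [heq, show (1 - 2*(1:ℝ)) = -1 by norm_num, hjeEven.neg_one_pow]
      norm_num

end rhoD


set_option maxHeartbeats 2000000 in
/-- Negativity of the growth rate below `δ*` (used in the proof of Theorem 4): if
`r_i·(1 − r_o) > f_max(0) = sup_{λ ∈ 𝒟_λ} [ r_i·H_b(λ) + log₂(1 − ρ_λ) ]`, then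
`0 < δ* < 1/2` and `G(δ) < 0` for every `δ ∈ (0, δ*)`. -/
theorem stmt_16 (dmax : ℕ) (Ω : ℕ → ℝ)
    (hΩpos : ∀ j ∈ Finset.Icc 1 dmax, 0 ≤ Ω j)
    (hΩsum : ∑ j ∈ Finset.Icc 1 dmax, Ω j = 1)
    (ri ro : ℝ) (hri : ri ∈ Set.Ioc (0 : ℝ) 1) (hro : ro ∈ Set.Ioo (0 : ℝ) 1)
    (hcond : ri * (1 - ro) >
      sSup ((fun lam => ri * Hb lam + Real.logb 2 (1 - rho dmax Ω lam)) '' Dset dmax Ω)) :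
    0 < deltaStar dmax Ω ri ro ∧ deltaStar dmax Ω ri ro < 1 / 2 ∧
      ∀ δ : ℝ, 0 < δ → δ < deltaStar dmax Ω ri ro → Gr dmax Ω ri ro δ < 0 := by
  obtain ⟨hri0, hri1⟩ := hri
  obtain ⟨hro0, hro1⟩ := hro
  have h2 : (1:ℝ) < 2 := one_lt_two
  have hcpos : 0 < ri * (1 - ro) := mul_pos hri0 (by linarith)
  have hclt : ri * (1 - ro) < ri := by nlinarith
  set c : ℝ := ri * (1 - ro) with hcdef
  have hDsub : Dset dmax Ω ⊆ Set.Icc 0 1 := Dset_subset_Icc dmax Ω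
  have hhalfD : (1/2 : ℝ) ∈ Dset dmax Ω := mem_Dset dmax Ω (by norm_num) le_rfl
  have hne : ∀ δ : ℝ, (ff dmax Ω ri δ '' Dset dmax Ω).Nonempty :=
    fun δ => ⟨_, Set.mem_image_of_mem _ hhalfD⟩
  have hbdd : ∀ δ : ℝ, 0 ≤ δ → δ ≤ 1 → BddAbove (ff dmax Ω ri δ '' Dset dmax Ω) := by
    intro δ h0 h1
    refine ⟨ri, ?_⟩
    rintro y ⟨l, hl, rfl⟩
    have hI := hDsub hl
    have hρ0 : 0 ≤ rho dmax Ω l := rho_nonneg hΩpos hI.1 hI.2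
    have hρ1 : rho dmax Ω l ≤ 1 := rho_le_one hΩpos hΩsum hI.1 hI.2
    have t1 : ri * Hb l ≤ ri := by nlinarith [Hb_le_one l]
    have t2 : δ * Real.logb 2 (rho dmax Ω l) ≤ 0 :=
      mul_nonpos_iff.2 (Or.inl ⟨h0, Real.logb_nonpos h2 hρ0 hρ1⟩)
    have t3 : (1 - δ) * Real.logb 2 (1 - rho dmax Ω l) ≤ 0 :=
      mul_nonpos_iff.2 (Or.inl ⟨by linarith, Real.logb_nonpos h2 (by linarith) (by linarith)⟩)
    unfold ff
    linarith
  have hle_fmax : ∀ δ l : ℝ, 0 ≤ δ → δ ≤ 1 → l ∈ Dset dmax Ω →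
      ff dmax Ω ri δ l ≤ fmax dmax Ω ri δ := fun δ l h0 h1 hl =>
    le_csSup (hbdd δ h0 h1) (Set.mem_image_of_mem _ hl)
  have himg : ((fun lam => ri * Hb lam + Real.logb 2 (1 - rho dmax Ω lam)) '' Dset dmax Ω)
      = ff dmax Ω ri 0 '' Dset dmax Ω := Set.image_congr fun l _ => by unfold ff; ring
  rw [himg] at hcond
  have hcond' : fmax dmax Ω ri 0 < c := hcond
  have hff_half : ∀ δ : ℝ, ff dmax Ω ri δ (1/2) = ri - 1 := by
    intro δ
    unfold ff
    rw [rho_half' hΩsum, Hb_half, show (1:ℝ) - 1/2 = 1/2 by norm_num, logb_half']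
    ring
  have hfm0ge : ri - 1 ≤ fmax dmax Ω ri 0 := by
    rw [← hff_half 0]; exact hle_fmax 0 (1/2) le_rfl zero_le_one hhalfD
  have hfmle : ∀ δ : ℝ, 0 ≤ δ → δ ≤ 1 → fmax dmax Ω ri δ ≤ fmax dmax Ω ri 0 + 2*δ := by
    intro δ h0 h1
    apply csSup_le (hne δ)
    rintro y ⟨l, hl, rfl⟩
    have hI := hDsub hl
    have hρ0 : 0 ≤ rho dmax Ω l := rho_nonneg hΩpos hI.1 hI.2
    have hρ1 : rho dmax Ω l < 1 := rho_lt_one hΩpos hΩsum hl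
    have hF0le : ff dmax Ω ri 0 l ≤ fmax dmax Ω ri 0 := hle_fmax 0 l le_rfl zero_le_one hl
    have hlp : Real.logb 2 (rho dmax Ω l) ≤ 0 := Real.logb_nonpos h2 hρ0 hρ1.le
    by_cases hcase : (1/4:ℝ) ≤ 1 - rho dmax Ω l
    · have heq : ff dmax Ω ri δ l = ff dmax Ω ri 0 l
          + δ * (Real.logb 2 (rho dmax Ω l) - Real.logb 2 (1 - rho dmax Ω l)) := by
        unfold ff; ring
      have hl4 : (-2:ℝ) ≤ Real.logb 2 (1 - rho dmax Ω l) := by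
        rw [← logb_quarter]
        exact Real.logb_le_logb_of_le h2 (by norm_num) hcase
      have hmul : δ * (Real.logb 2 (rho dmax Ω l) - Real.logb 2 (1 - rho dmax Ω l)) ≤ δ * 2 :=
        mul_le_mul_of_nonneg_left (by linarith) h0
      linarith
    · push_neg at hcase
      have h1p0 : (0:ℝ) < 1 - rho dmax Ω l := by linarith
      have hl4 : Real.logb 2 (1 - rho dmax Ω l) ≤ -2 := by
        rw [← logb_quarter]
        exact Real.logb_le_logb_of_le h2 h1p0 hcase.le
      have t1 : ri * Hb l ≤ ri := by nlinarith [Hb_le_one l]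
      have t2 : δ * Real.logb 2 (rho dmax Ω l) ≤ 0 :=
        mul_nonpos_iff.2 (Or.inl ⟨h0, hlp⟩)
      have t3 : (1 - δ) * Real.logb 2 (1 - rho dmax Ω l) ≤ (1 - δ) * (-2) :=
        mul_le_mul_of_nonneg_left hl4 (by linarith)
      unfold ff
      nlinarith
  have htfm : Tendsto (fun δ => fmax dmax Ω ri δ) (nhdsWithin 0 (Set.Ioi 0))
      (nhds (fmax dmax Ω ri 0)) := by
    rw [tendsto_order]
    constructor
    · intro a ha
      obtain ⟨y, ⟨l₀, hl₀, rfl⟩, hay⟩ := exists_lt_of_lt_csSup (hne 0) ha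
      set k := Real.logb 2 (rho dmax Ω l₀) - Real.logb 2 (1 - rho dmax Ω l₀) with hk
      have hffeq : ∀ δ : ℝ, ff dmax Ω ri δ l₀ = ff dmax Ω ri 0 l₀ + δ * k := by
        intro δ; rw [hk]; unfold ff; ring
      have hk1 : (0:ℝ) < |k| + 1 := by positivity
      set η := min 1 ((ff dmax Ω ri 0 l₀ - a) / (|k| + 1)) with hη
      have hηpos : 0 < η := lt_min one_pos (div_pos (by linarith) hk1)
      filter_upwards [Ioo_mem_nhdsGT_of_mem (Set.mem_Ico.2 ⟨le_rfl, hηpos⟩)] with δ hδ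
      have hδ1 : δ ≤ 1 := le_trans hδ.2.le (min_le_left _ _)
      have hfd : ff dmax Ω ri δ l₀ ≤ fmax dmax Ω ri δ := hle_fmax δ l₀ hδ.1.le hδ1 hl₀
      have h6 : η * (|k|+1) ≤ ff dmax Ω ri 0 l₀ - a := by
        rw [← le_div_iff₀ hk1]; exact min_le_right _ _
      have h7 : δ * (|k|+1) < ff dmax Ω ri 0 l₀ - a :=
        lt_of_lt_of_le (by nlinarith [hδ.2, hk1]) h6
      have h8 : δ * (-|k|) ≤ δ * k := mul_le_mul_of_nonneg_left (neg_abs_le k) hδ.1.le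
      have h9 : a < ff dmax Ω ri δ l₀ := by rw [hffeq δ]; nlinarith [hδ.1]
      linarith
    · intro a ha
      have hηpos : (0:ℝ) < min 1 ((a - fmax dmax Ω ri 0)/2) := lt_min one_pos (by linarith)
      filter_upwards [Ioo_mem_nhdsGT_of_mem (Set.mem_Ico.2 ⟨le_rfl, hηpos⟩)] with δ hδ
      have hδ1 : δ ≤ 1 := le_trans hδ.2.le (min_le_left _ _)
      have hub := hfmle δ hδ.1.le hδ1
      have hδ2 : δ < (a - fmax dmax Ω ri 0)/2 := lt_of_lt_of_le hδ.2 (min_le_right _ _)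
      linarith
  have hGr_eq : ∀ x : ℝ, Gr dmax Ω ri ro x = Hb x - c + fmax dmax Ω ri x := by
    intro x; rw [hcdef]; rfl
  have htG : Tendsto (Gr dmax Ω ri ro) (nhdsWithin 0 (Set.Ioi 0))
      (nhds (0 - c + fmax dmax Ω ri 0)) := by
    have hHb0 : Tendsto Hb (nhdsWithin 0 (Set.Ioi 0)) (nhds 0) := by
      have h : Tendsto Hb (nhdsWithin 0 (Set.Ioi 0)) (nhds (Hb 0)) :=
        (Hb_continuous.tendsto 0).mono_left (nhdsWithin_le_nhds (s := Set.Ioi 0))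
      rwa [Hb_zero] at h
    have h := (hHb0.sub_const c).add htfm
    exact h.congr fun x => (hGr_eq x).symm
  have hL : 0 - c + fmax dmax Ω ri 0 < 0 := by linarith
  have hlim : limUnder (nhdsWithin 0 (Set.Ioi 0)) (Gr dmax Ω ri ro)
      = 0 - c + fmax dmax Ω ri 0 := htG.limUnder_eq
  have hnotle : ¬ (0 ≤ limUnder (nhdsWithin 0 (Set.Ioi 0)) (Gr dmax Ω ri ro)) := by
    rw [hlim]; linarith
  set S := {δ : ℝ | 0 < δ ∧ 0 < Gr dmax Ω ri ro δ} with hSdef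
  have hδs : deltaStar dmax Ω ri ro = sInf S := by
    unfold deltaStar; rw [if_neg hnotle]
  have hSbdd : BddBelow S := ⟨0, fun s hs => by rw [hSdef] at hs; exact hs.1.le⟩
  obtain ⟨δ₂, hδ₂I, hδ₂Hb⟩ : ∃ x : ℝ, x ∈ Set.Ioo (0:ℝ) (1/2) ∧ 1 - ri*ro < Hb x := by
    have hval : 1 - ri*ro < Hb (1/2) := by rw [Hb_half]; nlinarith
    have h1 := Filter.mem_map.1 (Hb_continuous.continuousAt (x := (1/2:ℝ)) (Ioi_mem_nhds hval))
    have h3 : Hb ⁻¹' Set.Ioi (1 - ri*ro) ∈ nhdsWithin (1/2:ℝ) (Set.Iio (1/2)) :=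
      nhdsWithin_le_nhds h1
    have h4 : Set.Ioo (0:ℝ) (1/2) ∈ nhdsWithin (1/2:ℝ) (Set.Iio (1/2)) :=
      Ioo_mem_nhdsLT_of_mem (Set.mem_Ioc.2 ⟨by norm_num, le_rfl⟩)
    obtain ⟨x, hx1, hx2⟩ := Filter.nonempty_of_mem (Filter.inter_mem h3 h4)
    exact ⟨x, hx2, hx1⟩
  have hδ₂S : δ₂ ∈ S := by
    rw [hSdef]
    refine ⟨hδ₂I.1, ?_⟩
    have hf := hle_fmax δ₂ (1/2) hδ₂I.1.le (by linarith [hδ₂I.2]) hhalfD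
    rw [hff_half δ₂] at hf
    rw [hGr_eq]
    have hc2 : c = ri - ri*ro := by rw [hcdef]; ring
    linarith
  have hSne : S.Nonempty := ⟨δ₂, hδ₂S⟩
  have hinfS_lt : sInf S < 1/2 := lt_of_le_of_lt (csInf_le hSbdd hδ₂S) hδ₂I.2
  obtain ⟨u, hu0, huneg⟩ : ∃ u ∈ Set.Ioi (0:ℝ), Set.Ioo (0:ℝ) u ⊆ {x : ℝ | Gr dmax Ω ri ro x < 0} := by
    have hev : {x : ℝ | Gr dmax Ω ri ro x < 0} ∈ nhdsWithin (0:ℝ) (Set.Ioi 0) :=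
      Filter.mem_map.1 (htG (Iio_mem_nhds hL))
    rw [mem_nhdsGT_iff_exists_Ioo_subset] at hev
    exact hev
  have hinfS_pos : 0 < sInf S := by
    have hle : u ≤ sInf S := by
      apply le_csInf hSne
      intro s hs
      rw [hSdef] at hs
      by_contra hcon
      push_neg at hcon
      have := huneg ⟨hs.1, hcon⟩
      simp only [Set.mem_setOf_eq] at this
      linarith [hs.2]
    exact lt_of_lt_of_le (Set.mem_Ioi.1 hu0) hle
  refine ⟨by rw [hδs]; exact hinfS_pos, by rw [hδs]; exact hinfS_lt, ?_⟩
  -- Part 3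
  intro δ₀ hδ₀pos hδ₀lt
  rw [hδs] at hδ₀lt
  by_contra hGneg
  push_neg at hGneg
  have hδ₀half : δ₀ < 1/2 := lt_trans hδ₀lt hinfS_lt
  have hδ₀lt1 : δ₀ < 1 := by linarith
  have hcontra : ∀ x : ℝ, 0 < x → x < sInf S → 0 < Gr dmax Ω ri ro x → False := by
    intro x h1 hx2 h3
    have hxS : x ∈ S := by rw [hSdef]; exact ⟨h1, h3⟩
    exact absurd (csInf_le hSbdd hxS) (not_le.2 hx2)
  have hρc : ContinuousOn (rho dmax Ω) (Set.Icc (0:ℝ) (1/2)) :=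
    (rho_continuous dmax Ω).continuousOn
  have hGat : ∀ l x : ℝ, l ∈ Dset dmax Ω → rho dmax Ω l = x → 0 ≤ x → x ≤ 1 →
      ri * Hb l - c ≤ Gr dmax Ω ri ro x := by
    intro l x hl hrx h0 h1
    rw [hGr_eq]
    have hf := hle_fmax x l h0 h1 hl
    have heq : ff dmax Ω ri x l = ri * Hb l
        + (Hb x + x * Real.logb 2 x + (1-x) * Real.logb 2 (1-x)) - Hb x := by
      unfold ff; rw [hrx]; ring
    rw [Hb_self_id x] at heq
    linarith
  obtain ⟨lψ, hlψmem, hlψ⟩ : ∃ l ∈ Set.Icc (0:ℝ) (1/2), rho dmax Ω l = δ₀ := by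
    have hiv := intermediate_value_Icc (by norm_num : (0:ℝ) ≤ 1/2) hρc
    have hmem : δ₀ ∈ Set.Icc (rho dmax Ω 0) (rho dmax Ω (1/2)) := by
      rw [rho_zero', rho_half' hΩsum]; exact ⟨hδ₀pos.le, hδ₀half.le⟩
    exact hiv hmem
  have hlψpos : 0 < lψ := by
    rcases eq_or_lt_of_le hlψmem.1 with h | h
    · exfalso; rw [← h, rho_zero'] at hlψ; linarith
    · exact h
  rcases le_or_gt c (ri * Hb lψ) with hcaseI | hcaseII
  · -- Case I
    set x := (δ₀ + sInf S)/2 with hx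
    have hx1 : δ₀ < x := by rw [hx]; linarith
    have hx2 : x < sInf S := by rw [hx]; linarith
    have hx3 : x < 1/2 := lt_trans hx2 hinfS_lt
    have hx0 : 0 < x := lt_trans hδ₀pos hx1
    obtain ⟨l', hl'mem, hl'⟩ : ∃ l ∈ Set.Icc lψ (1/2), rho dmax Ω l = x := by
      have hsub : Set.Icc lψ (1/2) ⊆ Set.Icc (0:ℝ) (1/2) := Set.Icc_subset_Icc hlψmem.1 le_rfl
      have hiv := intermediate_value_Icc hlψmem.2 (hρc.mono hsub)
      have hmem : x ∈ Set.Icc (rho dmax Ω lψ) (rho dmax Ω (1/2)) := by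
        rw [hlψ, rho_half' hΩsum]; exact ⟨hx1.le, hx3.le⟩
      exact hiv hmem
    have hl'pos : 0 < l' := lt_of_lt_of_le hlψpos hl'mem.1
    have hl'Icc : l' ∈ Set.Icc (0:ℝ) (1/2) := ⟨hl'pos.le, hl'mem.2⟩
    have hl'gt : lψ < l' := by
      rcases eq_or_lt_of_le hl'mem.1 with h | h
      · exfalso; rw [← h, hlψ] at hl'; linarith
      · exact h
    have hl'D : l' ∈ Dset dmax Ω := mem_Dset dmax Ω hl'pos hl'mem.2
    have hHlt : Hb lψ < Hb l' := Hb_strictMonoOn hlψmem hl'Icc hl'gt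
    apply hcontra x hx0 hx2
    have hG := hGat l' x hl'D hl' hx0.le (by linarith)
    have hmul := mul_lt_mul_of_pos_left hHlt hri0
    linarith
  · -- Case II
    have hdegHb : ((1:ℝ) ∈ Dset dmax Ω ∧ rho dmax Ω 1 = 0) → Hb δ₀ < c := by
      rintro ⟨hD1, hρdeg⟩
      by_contra hge
      push_neg at hge
      set x := (δ₀ + sInf S)/2 with hx
      have hx1 : δ₀ < x := by rw [hx]; linarith
      have hx2 : x < sInf S := by rw [hx]; linarith
      have hx3 : x < 1/2 := lt_trans hx2 hinfS_lt
      have hx0 : 0 < x := lt_trans hδ₀pos hx1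
      apply hcontra x hx0 hx2
      have hffx : ff dmax Ω ri x 1 = 0 := by unfold ff; rw [hρdeg]; simp
      have hf := hle_fmax x 1 hx0.le (by linarith) hD1
      rw [hffx] at hf
      have hHlt : Hb δ₀ < Hb x := Hb_strictMonoOn ⟨hδ₀pos.le, hδ₀half.le⟩ ⟨hx0.le, hx3.le⟩ hx1
      rw [hGr_eq]
      linarith
    have hHbc_lt : Hb lψ < c / ri := by rw [lt_div_iff₀ hri0, mul_comm]; exact hcaseII
    obtain ⟨ν, hνmem, hνval⟩ : ∃ l ∈ Set.Icc lψ (1/2), Hb l = c / ri := by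
      have hiv := intermediate_value_Icc hlψmem.2
        (Hb_continuous.continuousOn : ContinuousOn Hb (Set.Icc lψ (1/2)))
      have hmem : c / ri ∈ Set.Icc (Hb lψ) (Hb (1/2)) := by
        rw [Hb_half]
        exact ⟨hHbc_lt.le, by rw [div_le_one hri0]; exact hclt.le⟩
      exact hiv hmem
    have hνc : ri * Hb ν = c := by rw [hνval]; field_simp
    have hνgt : lψ < ν := by
      rcases eq_or_lt_of_le hνmem.1 with h | h
      · exfalso; rw [← h] at hνval; rw [hνval] at hHbc_lt; exact lt_irrefl _ hHbc_lt
      · exact h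
    have hνlt : ν < 1/2 := by
      rcases eq_or_lt_of_le hνmem.2 with h | h
      · exfalso; rw [h, Hb_half] at hνval
        have : c = ri := by field_simp at hνval; linarith
        linarith
      · exact h
    have hνpos : 0 < ν := lt_trans hlψpos hνgt
    have hνIcc : ν ∈ Set.Icc (0:ℝ) (1/2) := ⟨hνpos.le, hνmem.2⟩
    have hrgt : δ₀ < rho dmax Ω ν := by
      rw [← hlψ]; exact rho_strictMonoOn hΩpos hΩsum hlψmem hνIcc hνgt
    have hrlt : rho dmax Ω ν < 1/2 := by
      rw [← rho_half' hΩsum (dmax := dmax) (Ω := Ω)]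
      exact rho_strictMonoOn hΩpos hΩsum hνIcc ⟨by norm_num, le_rfl⟩ hνlt
    set r := rho dmax Ω ν with hrdef
    set dm := min r (sInf S) with hdm
    have hdmgt : δ₀ < dm := lt_min hrgt hδ₀lt
    set d := (δ₀ + dm)/2 with hd
    have hd1 : δ₀ < d := by rw [hd]; linarith
    have hd2 : d < dm := by rw [hd]; linarith
    have hd0 : 0 < d := lt_trans hδ₀pos hd1
    have hdr : d < r := lt_of_lt_of_le hd2 (min_le_left _ _)
    have hdS : d < sInf S := lt_of_lt_of_le hd2 (min_le_right _ _)
    have hdhalf : d < 1/2 := lt_trans hdr hrlt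
    obtain ⟨lh, hlhmem, hlh⟩ : ∃ l ∈ Set.Icc lψ ν, rho dmax Ω l = d := by
      have hsub : Set.Icc lψ ν ⊆ Set.Icc (0:ℝ) (1/2) := Set.Icc_subset_Icc hlψmem.1 hνmem.2
      have hiv := intermediate_value_Icc hνgt.le (hρc.mono hsub)
      have hmem : d ∈ Set.Icc (rho dmax Ω lψ) (rho dmax Ω ν) := by
        rw [hlψ, ← hrdef]; exact ⟨hd1.le, hdr.le⟩
      exact hiv hmem
    have hlhpos : 0 < lh := lt_of_lt_of_le hlψpos hlhmem.1
    have hlhIcc : lh ∈ Set.Icc (0:ℝ) (1/2) := ⟨hlhpos.le, le_trans hlhmem.2 hνmem.2⟩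
    have hlhν : lh < ν := by
      rcases eq_or_lt_of_le hlhmem.2 with h | h
      · exfalso; rw [h, ← hrdef] at hlh; linarith
      · exact h
    have hlhc : ri * Hb lh < c := by
      have hHlt := Hb_strictMonoOn hlhIcc hνIcc hlhν
      have hmul := mul_lt_mul_of_pos_left hHlt hri0
      linarith [hνc]
    set γ := (d - δ₀) * (Real.logb 2 r - Real.logb 2 d) with hγ
    have hγpos : 0 < γ := by
      apply mul_pos (by linarith)
      have := Real.logb_lt_logb h2 hd0 hdr
      linarith
    have hD2d : 0 < D2 δ₀ d := D2_pos hδ₀pos hδ₀lt1 hd0 (by linarith) (ne_of_lt hd1)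
    obtain ⟨εd, hεd0, hεdle⟩ : ∃ εd : ℝ, 0 < εd ∧
        (((1:ℝ) ∈ Dset dmax Ω ∧ rho dmax Ω 1 = 0) → εd ≤ (c - Hb δ₀)/2) := by
      by_cases hdeg : ((1:ℝ) ∈ Dset dmax Ω ∧ rho dmax Ω 1 = 0)
      · exact ⟨(c - Hb δ₀)/2, by linarith [hdegHb hdeg], fun _ => le_rfl⟩
      · exact ⟨1, one_pos, fun h => absurd h hdeg⟩
    set ε := min (min ((c - ri * Hb lh)/2) (D2 δ₀ d / 2)) (min (γ/2) εd) with hεdef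
    have hε0 : 0 < ε := lt_min (lt_min (by linarith) (by linarith)) (lt_min (by linarith) hεd0)
    have hε1 : ε ≤ (c - ri * Hb lh)/2 := le_trans (min_le_left _ _) (min_le_left _ _)
    have hε2 : ε ≤ D2 δ₀ d / 2 := le_trans (min_le_left _ _) (min_le_right _ _)
    have hε3 : ε ≤ γ/2 := le_trans (min_le_right _ _) (min_le_left _ _)
    have hε4 : ε ≤ εd := le_trans (min_le_right _ _) (min_le_right _ _)
    have hεc : ε < c := by
      have hnn : 0 ≤ ri * Hb lh :=
        mul_nonneg hri0.le (Hb_nonneg hlhIcc.1 (by linarith [hlhIcc.2]))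
      linarith
    have hfmge' : c - Hb δ₀ - ε < sSup (ff dmax Ω ri δ₀ '' Dset dmax Ω) := by
      have h := hGr_eq δ₀
      have hGδ₀ : 0 ≤ Gr dmax Ω ri ro δ₀ := hGneg
      unfold fmax at h
      linarith
    obtain ⟨y, ⟨l, hlD, rfl⟩, hly⟩ := exists_lt_of_lt_csSup (hne δ₀) hfmge'
    have hlI := hDsub hlD
    have hρl0 : 0 ≤ rho dmax Ω l := rho_nonneg hΩpos hlI.1 hlI.2
    have hρl1 : rho dmax Ω l < 1 := rho_lt_one hΩpos hΩsum hlD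
    rcases eq_or_lt_of_le hρl0 with hρ0 | hρpos
    · have hl1 : l = 1 := by
        by_contra hne1
        have hlt1 : l < 1 := lt_of_le_of_ne hlI.2 hne1
        have := rho_pos hΩpos hΩsum (Dset_pos dmax Ω hlD) hlt1
        linarith [hρ0]
      have hdeg : (1:ℝ) ∈ Dset dmax Ω ∧ rho dmax Ω 1 = 0 :=
        ⟨hl1 ▸ hlD, by rw [← hl1, ← hρ0]⟩
      have hHb0 := hdegHb hdeg
      have hffval : ff dmax Ω ri δ₀ l = 0 := by
        unfold ff; rw [← hρ0, hl1]; simp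
      rw [hffval] at hly
      have := hεdle hdeg
      linarith
    · have hffeq : ff dmax Ω ri δ₀ l = ri * Hb l - Hb δ₀ - D2 δ₀ (rho dmax Ω l) := by
        have hid := Hb_add_eq_neg_D2 δ₀ (rho dmax Ω l)
        unfold ff; linarith
      have hkey : c - ε + D2 δ₀ (rho dmax Ω l) < ri * Hb l := by
        rw [hffeq] at hly; linarith
      have hD2l : 0 ≤ D2 δ₀ (rho dmax Ω l) := D2_nonneg hδ₀pos.le hδ₀lt1.le hρpos hρl1
      set μ := min l (1 - l) with hμdef
      have hμIcc : μ ∈ Set.Icc (0:ℝ) (1/2) := by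
        constructor
        · exact le_min hlI.1 (by linarith [hlI.2])
        · rcases le_total l (1-l) with h | h
          · rw [hμdef, min_eq_left h]; linarith
          · rw [hμdef, min_eq_right h]; linarith
      have hHbμ : Hb μ = Hb l := by
        rcases le_total l (1-l) with h | h
        · rw [hμdef, min_eq_left h]
        · rw [hμdef, min_eq_right h, Hb_symm]
      have hρμle : rho dmax Ω μ ≤ rho dmax Ω l := by
        rw [hμdef]; exact rho_min_le hΩpos hlI.1 hlI.2
      have hμpos : 0 < μ := by
        rcases eq_or_lt_of_le hμIcc.1 with h | h
        · exfalso
          rw [← h, Hb_zero] at hHbμ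
          rw [← hHbμ, mul_zero] at hkey
          linarith
        · exact h
      have hμD : μ ∈ Dset dmax Ω := mem_Dset dmax Ω hμpos hμIcc.2
      have hqhalf : rho dmax Ω μ ≤ 1/2 := by
        rw [← rho_half' hΩsum (dmax := dmax) (Ω := Ω)]
        exact rho_monotoneOn hΩpos hΩsum hμIcc ⟨by norm_num, le_rfl⟩ hμIcc.2
      rcases le_or_gt (rho dmax Ω μ) d with hstrip1 | hstrip23
      · -- strip 1
        have hμlh : μ ≤ lh := by
          by_contra hcon; push_neg at hcon
          have := rho_strictMonoOn hΩpos hΩsum hlhIcc hμIcc hcon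
          rw [hlh] at this; linarith
        have hHμlh : Hb μ ≤ Hb lh := Hb_monotoneOn hμIcc hlhIcc hμlh
        have hmul : ri * Hb μ ≤ ri * Hb lh := mul_le_mul_of_nonneg_left hHμlh hri0.le
        rw [← hHbμ] at hkey
        linarith
      · rcases lt_or_ge (rho dmax Ω μ) r with hstrip2 | hstrip3
        · -- strip 2
          have hμν : μ < ν := by
            by_contra hcon; push_neg at hcon
            have := rho_monotoneOn hΩpos hΩsum hνIcc hμIcc hcon
            rw [← hrdef] at this; linarith
          have hHμν : Hb μ < Hb ν := Hb_strictMonoOn hμIcc hνIcc hμν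
          have hlec : ri * Hb μ < c := by
            have := mul_lt_mul_of_pos_left hHμν hri0
            linarith [hνc]
          have hm1 : D2 δ₀ (rho dmax Ω μ) ≤ D2 δ₀ (rho dmax Ω l) :=
            D2_mono hδ₀pos (by linarith) hρμle hρl1
          have hm2 : D2 δ₀ d ≤ D2 δ₀ (rho dmax Ω μ) :=
            D2_mono hδ₀pos hd1.le hstrip23.le (by linarith [hqhalf])
          rw [← hHbμ] at hkey
          linarith
        · -- strip 3
          apply hcontra d hd0 hdS
          have hffd : ff dmax Ω ri d μ = ri * Hb μ - Hb d - D2 d (rho dmax Ω μ) := by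
            have hid := Hb_add_eq_neg_D2 d (rho dmax Ω μ)
            unfold ff; linarith
          have hfd := hle_fmax d μ hd0.le (by linarith) hμD
          have hchain := D2_chain δ₀ d (rho dmax Ω μ)
          have hrpos : (0:ℝ) < r := lt_trans hδ₀pos hrgt
          have hlog1 : Real.logb 2 r ≤ Real.logb 2 (rho dmax Ω μ) :=
            Real.logb_le_logb_of_le h2 hrpos hstrip3
          have hlog2 : Real.logb 2 (1 - rho dmax Ω μ) ≤ Real.logb 2 (1 - d) :=
            Real.logb_le_logb_of_le h2 (by linarith [hqhalf]) (by linarith [hdr, hstrip3])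
          have hm1 : D2 δ₀ (rho dmax Ω μ) ≤ D2 δ₀ (rho dmax Ω l) :=
            D2_mono hδ₀pos (by linarith) hρμle hρl1
          have hB : γ ≤ (d - δ₀) * ((Real.logb 2 (rho dmax Ω μ) - Real.logb 2 d)
              + (Real.logb 2 (1 - d) - Real.logb 2 (1 - rho dmax Ω μ))) := by
            rw [hγ]
            apply mul_le_mul_of_nonneg_left ?_ (by linarith : (0:ℝ) ≤ d - δ₀)
            linarith
          rw [← hHbμ] at hkey
          rw [hGr_eq]
          linarith
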